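/- arXiv:2012.03621 — 5 statements merged into one kernel-verified Lean document; each statement's English description precedes it below -/
import Mathlib

section
/- Courant–Fischer for quaternionic Hermitian matrices: for each k, the k-th smallest eigenvalue t_k of a Hermitian quaternionic matrix S equals the minimum, over all k-dimensional right ℍ-subspaces E of ℍⁿ, of the maximum of R(S,v) over nonzero v ∈ E. -/
/-!
Expanding a vector in the orthonormal eigenbasis with right coefficients, `v = ∑ uᵢ cᵢ`, gives
`R(S, v) = ∑ tᵢ ‖cᵢ‖² / ∑ ‖cᵢ‖²`, a weighted average of the eigenvalues that occur. On the span of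
`u₁, …, u_k` this is at most `t_k`, with equality at `u_k`. Every `k`-dimensional `E` meets the
`(n - k + 1)`-dimensional span of `u_k, …, u_n` in a nonzero vector, where it is at least `t_k`.
-/

open Quaternion Matrix MulOpposite

instance {R : Type*} [DivisionRing R] : Module.Finite Rᵐᵒᵖ R :=
  .equiv (opLinearEquiv Rᵐᵒᵖ).symm

theorem Module.finrank_op_self (R : Type*) [DivisionRing R] : Module.finrank Rᵐᵒᵖ R = 1 :=
  (opLinearEquiv Rᵐᵒᵖ).finrank_eq.trans (Module.finrank_self _)

theorem Module.finrank_op_pi (R ι : Type*) [DivisionRing R] [Fintype ι] :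
    Module.finrank Rᵐᵒᵖ (ι → R) = Fintype.card ι := by
  simp [Module.finrank_pi_fintype, Module.finrank_op_self]

theorem Submodule.inf_ne_bot_of_finrank_lt_add {K V : Type*} [DivisionRing K] [AddCommGroup V]
    [Module K V] [FiniteDimensional K V] {E F : Submodule K V}
    (h : Module.finrank K V < Module.finrank K E + Module.finrank K F) : E ⊓ F ≠ ⊥ := by
  intro hbot
  have := Submodule.finrank_sup_add_finrank_inf_eq E F
  rw [hbot, finrank_bot] at this
  have := Submodule.finrank_le (E ⊔ F)
  omega

theorem exists_eq_sum_op_smul_of_mem_span {R M κ : Type*} [Semiring R] [AddCommMonoid M]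
    [Module Rᵐᵒᵖ M] [Fintype κ] {w : κ → M} {v : M}
    (hv : v ∈ Submodule.span Rᵐᵒᵖ (Set.range w)) : ∃ c : κ → R, v = ∑ i, op (c i) • w i := by
  obtain ⟨c, rfl⟩ := (Submodule.mem_span_range_iff_exists_fun _).mp hv
  exact ⟨fun i => unop (c i), by simp⟩

section StarRing

variable {R ι κ : Type*} [Ring R] [StarRing R] [Fintype ι]

/-- Mathlib's `Orthonormal` needs an inner product space, which `ι → R` over a noncommutative `R`
is not; this is orthonormality for the form `star v ⬝ᵥ w`. -/
def DotOrthonormal [DecidableEq κ] (w : κ → ι → R) : Prop :=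
  ∀ i j, star (w i) ⬝ᵥ w j = if i = j then 1 else 0

theorem star_sum_op_smul_dotProduct [Fintype κ] (w : κ → ι → R) (c : κ → R) (x : ι → R) :
    star (∑ i, op (c i) • w i) ⬝ᵥ x = ∑ i, star (c i) * (star (w i) ⬝ᵥ x) := by
  simp only [dotProduct, Finset.sum_apply, Pi.star_apply, Pi.smul_apply, star_sum,
    op_smul_eq_mul, star_mul, Finset.sum_mul, Finset.mul_sum, mul_assoc]
  exact Finset.sum_comm

namespace DotOrthonormal

variable [DecidableEq κ] {w : κ → ι → R}

theorem dotProduct_sum_op_smul [Fintype κ] (hw : DotOrthonormal w) (c : κ → R) (j : κ) :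
    star (w j) ⬝ᵥ ∑ i, op (c i) • w i = c j := by
  simp [dotProduct_sum, dotProduct_smul, hw j]

theorem star_sum_op_smul_dotProduct_sum_op_smul [Fintype κ] (hw : DotOrthonormal w)
    (c d : κ → R) :
    star (∑ i, op (c i) • w i) ⬝ᵥ ∑ i, op (d i) • w i = ∑ i, star (c i) * d i := by
  simp only [star_sum_op_smul_dotProduct, hw.dotProduct_sum_op_smul]

theorem linearIndependent [Fintype κ] (hw : DotOrthonormal w) : LinearIndependent Rᵐᵒᵖ w := by
  rw [Fintype.linearIndependent_iff]
  intro c hc j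
  simpa [hc] using (hw.dotProduct_sum_op_smul (fun i => unop (c i)) j).symm

theorem comp {κ' : Type*} [DecidableEq κ'] (hw : DotOrthonormal w) {f : κ' → κ}
    (hf : f.Injective) : DotOrthonormal (w ∘ f) := by
  intro i j
  simp [hw (f i) (f j), hf.eq_iff]

theorem ne_zero [Nontrivial R] (hw : DotOrthonormal w) (i : κ) : w i ≠ 0 := by
  intro h
  simpa [h] using hw i i

end DotOrthonormal

end StarRing

@[simp, norm_cast]
theorem Quaternion.coe_sum {α : Type*} (s : Finset α) (f : α → ℝ) :
    ((∑ i ∈ s, f i : ℝ) : ℍ[ℝ]) = ∑ i ∈ s, (f i : ℍ[ℝ]) :=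
  map_sum (algebraMap ℝ ℍ[ℝ]) f s

theorem Quaternion.star_mul_self_eq_norm_sq (q : ℍ[ℝ]) : star q * q = ((‖q‖ ^ 2 : ℝ) : ℍ[ℝ]) := by
  rw [star_mul_self, normSq_eq_norm_mul_self, sq]

theorem Quaternion.star_mul_coe_mul_self (r : ℝ) (q : ℍ[ℝ]) :
    star q * (r * q) = ((r * ‖q‖ ^ 2 : ℝ) : ℍ[ℝ]) := by
  rw [(coe_commute r _).eq, ← mul_assoc, star_mul_self_eq_norm_sq, ← coe_mul, mul_comm]

theorem Quaternion.star_dotProduct_self {ι : Type*} [Fintype ι] (v : ι → ℍ[ℝ]) :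
    star v ⬝ᵥ v = ((∑ l, ‖v l‖ ^ 2 : ℝ) : ℍ[ℝ]) := by
  simp only [dotProduct, Pi.star_apply, star_mul_self_eq_norm_sq, coe_sum]

theorem sum_norm_sq_pos {ι E : Type*} [Fintype ι] [NormedAddCommGroup E] {v : ι → E}
    (hv : v ≠ 0) : 0 < ∑ l, ‖v l‖ ^ 2 := by
  obtain ⟨l, hl⟩ := Function.ne_iff.mp hv
  exact Finset.sum_pos' (fun _ _ => by positivity) ⟨l, Finset.mem_univ l, by positivity⟩

noncomputable def rayleigh {ι : Type*} [Fintype ι] (S : Matrix ι ι ℍ[ℝ]) (v : ι → ℍ[ℝ]) : ℝ :=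
  (star v ⬝ᵥ S *ᵥ v).re / ∑ l, ‖v l‖ ^ 2

section Rayleigh

variable {ι κ : Type*} [Fintype ι] {S : Matrix ι ι ℍ[ℝ]}

theorem rayleigh_of_mulVec_eq {v : ι → ℍ[ℝ]} {t : ℝ} (hv : v ≠ 0)
    (hSv : S *ᵥ v = fun l => v l * (t : ℍ[ℝ])) : rayleigh S v = t := by
  have hdot : star v ⬝ᵥ S *ᵥ v = (star v ⬝ᵥ v) * t := by
    rw [hSv]
    exact dotProduct_smul (op (t : ℍ[ℝ])) (star v) v
  rw [rayleigh, hdot, star_dotProduct_self, ← coe_mul, re_coe,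
    mul_div_cancel_left₀ _ (sum_norm_sq_pos hv).ne']

variable [Fintype κ] {w : κ → ι → ℍ[ℝ]} {t : κ → ℝ}

theorem mulVec_sum_op_smul (heig : ∀ i, S *ᵥ w i = fun l => w i l * (t i : ℍ[ℝ]))
    (c : κ → ℍ[ℝ]) : S *ᵥ ∑ i, op (c i) • w i = ∑ i, op ((t i : ℍ[ℝ]) * c i) • w i := by
  simp only [mulVec_sum, mulVec_smul, heig]
  refine Finset.sum_congr rfl fun i _ => funext fun l => ?_
  simp [mul_assoc]

namespace DotOrthonormal

variable [DecidableEq κ]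

theorem sum_norm_sq_sum_op_smul (hw : DotOrthonormal w) (c : κ → ℍ[ℝ]) :
    ∑ l, ‖(∑ i, op (c i) • w i) l‖ ^ 2 = ∑ i, ‖c i‖ ^ 2 := by
  have h := star_dotProduct_self (∑ i, op (c i) • w i)
  rw [hw.star_sum_op_smul_dotProduct_sum_op_smul] at h
  exact coe_injective (h.symm.trans (star_dotProduct_self c))

theorem rayleigh_sum_op_smul (hw : DotOrthonormal w)
    (heig : ∀ i, S *ᵥ w i = fun l => w i l * (t i : ℍ[ℝ])) (c : κ → ℍ[ℝ]) :
    rayleigh S (∑ i, op (c i) • w i) = (∑ i, t i * ‖c i‖ ^ 2) / ∑ i, ‖c i‖ ^ 2 := by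
  rw [rayleigh, hw.sum_norm_sq_sum_op_smul, mulVec_sum_op_smul heig,
    hw.star_sum_op_smul_dotProduct_sum_op_smul]
  simp only [star_mul_coe_mul_self, ← coe_sum, re_coe]

theorem rayleigh_le_of_mem_span (hw : DotOrthonormal w)
    (heig : ∀ i, S *ᵥ w i = fun l => w i l * (t i : ℍ[ℝ])) {v : ι → ℍ[ℝ]}
    (hv : v ∈ Submodule.span ℍ[ℝ]ᵐᵒᵖ (Set.range w)) (hv0 : v ≠ 0) {b : ℝ}
    (hb : ∀ i, t i ≤ b) : rayleigh S v ≤ b := by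
  obtain ⟨c, rfl⟩ := exists_eq_sum_op_smul_of_mem_span hv
  have hpos : 0 < ∑ i, ‖c i‖ ^ 2 := hw.sum_norm_sq_sum_op_smul c ▸ sum_norm_sq_pos hv0
  rw [hw.rayleigh_sum_op_smul heig, div_le_iff₀ hpos, Finset.mul_sum]
  exact Finset.sum_le_sum fun i _ => mul_le_mul_of_nonneg_right (hb i) (sq_nonneg _)

theorem le_rayleigh_of_mem_span (hw : DotOrthonormal w)
    (heig : ∀ i, S *ᵥ w i = fun l => w i l * (t i : ℍ[ℝ])) {v : ι → ℍ[ℝ]}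
    (hv : v ∈ Submodule.span ℍ[ℝ]ᵐᵒᵖ (Set.range w)) (hv0 : v ≠ 0) {b : ℝ}
    (hb : ∀ i, b ≤ t i) : b ≤ rayleigh S v := by
  obtain ⟨c, rfl⟩ := exists_eq_sum_op_smul_of_mem_span hv
  have hpos : 0 < ∑ i, ‖c i‖ ^ 2 := hw.sum_norm_sq_sum_op_smul c ▸ sum_norm_sq_pos hv0
  rw [hw.rayleigh_sum_op_smul heig, le_div_iff₀ hpos, Finset.mul_sum]
  exact Finset.sum_le_sum fun i _ => mul_le_mul_of_nonneg_right (hb i) (sq_nonneg _)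

end DotOrthonormal

end Rayleigh

theorem courant_fischer_min_max {n : ℕ}
    (S : Matrix (Fin n) (Fin n) ℍ[ℝ])
    (t : Fin n → ℝ) (ht : Monotone t) (u : Fin n → Fin n → ℍ[ℝ])
    (horth : ∀ i j, star (u i) ⬝ᵥ u j = if i = j then 1 else 0)
    (heig : ∀ j, S.mulVec (u j) = fun l => u j l * (t j : ℍ[ℝ]))
    (k : ℕ) (hk : 1 ≤ k) (hkn : k ≤ n) :
    IsLeast {m : ℝ | ∃ E : Submodule ℍ[ℝ]ᵐᵒᵖ (Fin n → ℍ[ℝ]),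
        Module.finrank ℍ[ℝ]ᵐᵒᵖ E = k ∧
        IsGreatest {r : ℝ | ∃ v ∈ E, v ≠ 0 ∧
          (star v ⬝ᵥ S.mulVec v).re / (∑ i, ‖v i‖ ^ 2) = r} m}
      (t ⟨k - 1, by omega⟩) := by
  set κ : Fin n := ⟨k - 1, by omega⟩
  have hu : DotOrthonormal u := horth
  have hlow : DotOrthonormal fun i : Set.Iic κ => u i := hu.comp Subtype.val_injective
  have hhigh : DotOrthonormal fun i : Set.Ici κ => u i := hu.comp Subtype.val_injective
  refine ⟨⟨Submodule.span ℍ[ℝ]ᵐᵒᵖ (Set.range fun i : Set.Iic κ => u i), ?_, ?_, ?_⟩, ?_⟩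
  · rw [finrank_span_eq_card hlow.linearIndependent, Fintype.card_Iic, Fin.card_Iic, Fin.val_mk]
    omega
  · exact ⟨u κ, Submodule.subset_span ⟨⟨κ, Set.mem_Iic.2 le_rfl⟩, rfl⟩, hu.ne_zero κ,
      rayleigh_of_mulVec_eq (hu.ne_zero κ) (heig κ)⟩
  · rintro r ⟨v, hv, hv0, rfl⟩
    exact hlow.rayleigh_le_of_mem_span (fun i => heig i) hv hv0 fun i => ht i.2
  · rintro r ⟨E, hE, hmax⟩
    set F := Submodule.span ℍ[ℝ]ᵐᵒᵖ (Set.range fun i : Set.Ici κ => u i)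
    have hdim : Module.finrank ℍ[ℝ]ᵐᵒᵖ (Fin n → ℍ[ℝ]) <
        Module.finrank ℍ[ℝ]ᵐᵒᵖ E + Module.finrank ℍ[ℝ]ᵐᵒᵖ F := by
      rw [finrank_span_eq_card hhigh.linearIndependent, Module.finrank_op_pi, hE,
        Fintype.card_Ici, Fin.card_Ici, Fintype.card_fin, Fin.val_mk]
      omega
    obtain ⟨v, hv, hv0⟩ :=
      Submodule.exists_mem_ne_zero_of_ne_bot (Submodule.inf_ne_bot_of_finrank_lt_add hdim)
    exact (hhigh.le_rayleigh_of_mem_span (fun i => heig i) hv.2 hv0 fun i => ht i.2).trans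
      (hmax.2 ⟨v, hv.1, hv0, rfl⟩)
end

section
/- A 2×2 Hermitian quaternionic matrix S = [[s, b],[b*, s′]] with s, s′ ∈ ℝ and b ≠ 0 has non-real left eigenvalues if and only if Re(b) = 0 and s = s′; in that case the left eigenvalues are exactly the quaternions λ = s + bω with Re(ω) = 0 and |ω| = 1. -/
/-!
`S - λ` is singular iff its Schur complement vanishes: `star b = (s' - λ) b⁻¹ (s - λ)`.
Multiplying on the left by `b` shows that the conjugate `b (s' - λ) b⁻¹` is
`|b|² (s - λ)⁻¹`, a positive multiple `k • star (s - λ)`. Conjugation preserves real parts and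
norms, and the imaginary parts of `s' - λ` and `star (s - λ)` have the same norm, nonzero when
`λ` is not real; this forces `k = 1` and `s = s'`, after which `b` anticommutes with `Im λ`, so
`Re b = 0`. Conversely, once `star b = -b` and `s = s'`, the condition says exactly that
`ω = b⁻¹ (λ - s)` squares to `-1`, i.e. is a unit imaginary quaternion.
-/

open Quaternion Matrix

namespace Matrix

theorem isUnit_fin_two_iff_of_ne_zero {K : Type*} [DivisionRing K] {p b c q : K} (hb : b ≠ 0) :
    IsUnit !![p, b; c, q] ↔ c ≠ q * b⁻¹ * p := by
  constructor
  · rintro hM rfl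
    have hker : !![p, b; q * b⁻¹ * p, q] *ᵥ ![1, -(b⁻¹ * p)] =
        !![p, b; q * b⁻¹ * p, q] *ᵥ 0 := by
      ext i
      fin_cases i <;> simp [mulVec, dotProduct, mul_assoc, mul_inv_cancel_left₀ hb]
    simpa using congrFun (mulVec_injective_of_isUnit hM hker) 0
  · intro hc
    obtain ⟨d, hd, rfl⟩ : ∃ d ≠ 0, c = d + q * b⁻¹ * p :=
      ⟨c - q * b⁻¹ * p, sub_ne_zero.mpr hc, (sub_add_cancel _ _).symm⟩
    refine isUnit_iff_exists.mpr
      ⟨!![-(d⁻¹ * q * b⁻¹), d⁻¹; b⁻¹ + b⁻¹ * p * d⁻¹ * q * b⁻¹, -(b⁻¹ * p * d⁻¹)], ?_, ?_⟩ <;>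
    · ext i j
      fin_cases i <;> fin_cases j <;> simp [mul_add, add_mul, mul_assoc, hb, hd]

end Matrix

theorem sub_mul_inv_mul_sub_eq_neg_iff {K : Type*} [DivisionRing K] {b : K} (hb : b ≠ 0)
    (c x : K) : (c - x) * b⁻¹ * (c - x) = -b ↔ ∃ ω, ω * ω = -1 ∧ x = c + b * ω := by
  constructor
  · intro h
    refine ⟨b⁻¹ * (x - c), ?_, by rw [mul_inv_cancel_left₀ hb]; abel⟩
    calc b⁻¹ * (x - c) * (b⁻¹ * (x - c)) = b⁻¹ * ((c - x) * b⁻¹ * (c - x)) := by noncomm_ring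
      _ = -1 := by rw [h, mul_neg, inv_mul_cancel₀ hb]
  · rintro ⟨ω, hω, rfl⟩
    calc (c - (c + b * ω)) * b⁻¹ * (c - (c + b * ω)) = b * ω * (b⁻¹ * b) * ω := by noncomm_ring
      _ = -b := by rw [inv_mul_cancel₀ hb, mul_one, mul_assoc, hω, mul_neg_one]

namespace Quaternion

variable {R : Type*}

section CommRing

variable [CommRing R]

theorem eq_re_iff_im_eq_zero {a : ℍ[R]} : a = a.re ↔ a.im = 0 := by
  nth_rewrite 1 [← re_add_im a]
  exact add_eq_left

theorem re_mul_comm (a b : ℍ[R]) : (a * b).re = (b * a).re := by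
  simp only [re_mul]
  ring

theorem im_mul_sub_star_mul (a u : ℍ[R]) : (a * u - star u * a).im = (2 * a.re) • u.im := by
  ext <;> simp <;> ring

theorem exists_mul_self_eq_neg_one_and_im_mul_ne_zero {b : ℍ[R]} (hb : b ≠ 0) :
    ∃ ω : ℍ[R], ω * ω = -1 ∧ (b * ω).im ≠ 0 := by
  -- `⟨0, 1, 0, 0⟩` is typed `ℍ[R,-1,0,-1]`, on which the `ℍ[R]` simp lemmas do not fire
  obtain ⟨i, hi⟩ : ∃ i : ℍ[R], i.re = 0 ∧ i.imI = 1 ∧ i.imJ = 0 ∧ i.imK = 0 :=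
    ⟨⟨0, 1, 0, 0⟩, by simp⟩
  obtain ⟨j, hj⟩ : ∃ j : ℍ[R], j.re = 0 ∧ j.imI = 0 ∧ j.imJ = 1 ∧ j.imK = 0 :=
    ⟨⟨0, 0, 1, 0⟩, by simp⟩
  -- if both `b i` and `b j` were real, every coordinate of `b` would vanish
  by_contra! h
  have hbi := h i (by ext <;> simp [hi])
  have hbj := h j (by ext <;> simp [hj])
  clear h
  exact hb (by ext <;> simp_all [Quaternion.ext_iff])

end CommRing

section LinearOrderedField

variable [Field R] [LinearOrder R] [IsStrictOrderedRing R]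

theorem re_mul_mul_inv (a x : ℍ[R]) (ha : a ≠ 0) : (a * x * a⁻¹).re = x.re := by
  rw [re_mul_comm, ← mul_assoc, inv_mul_cancel₀ ha, one_mul]

theorem normSq_mul_mul_inv (a x : ℍ[R]) (ha : a ≠ 0) : normSq (a * x * a⁻¹) = normSq x := by
  rw [map_mul, map_mul, normSq_inv, mul_right_comm, mul_inv_cancel₀ (normSq_ne_zero.2 ha),
    one_mul]

theorem re_eq_zero_of_mul_eq_star_mul {a u : ℍ[R]} (h : a * u = star u * a) (hu : u.im ≠ 0) :
    a.re = 0 := by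
  have him := im_mul_sub_star_mul a u
  rw [h, sub_self, im_zero, eq_comm, smul_eq_zero] at him
  simpa [hu] using him

theorem mul_mul_inv_eq_normSq_div_smul_star {b p q : ℍ[R]} (hp : p ≠ 0)
    (h : star b = q * b⁻¹ * p) : b * q * b⁻¹ = (normSq b / normSq p) • star p := by
  have : b * q * b⁻¹ * p = normSq b := by
    rw [← self_mul_star, h]
    simp only [mul_assoc]
  rw [(eq_mul_inv_iff_mul_eq₀ hp).2 this, inv_def, coe_mul_eq_smul, smul_smul, ← div_eq_mul_inv]

theorem re_eq_zero_and_eq_of_star_eq_mul_inv_mul {b x : ℍ[R]} {s s' : R} (hb : b ≠ 0)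
    (hx : x.im ≠ 0) (h : star b = (s' - x) * b⁻¹ * (s - x)) : b.re = 0 ∧ s = s' := by
  set p : ℍ[R] := s - x
  set q : ℍ[R] := s' - x
  have hp : p ≠ 0 := fun hp => hx (by simpa [p] using congrArg im hp)
  set k := normSq b / normSq p
  have hk : 0 < k :=
    div_pos (normSq_nonneg.lt_of_ne' (normSq_ne_zero.2 hb))
      (normSq_nonneg.lt_of_ne' (normSq_ne_zero.2 hp))
  have hconj : b * q * b⁻¹ = k • star p := mul_mul_inv_eq_normSq_div_smul_star hp h
  set W := x.imI ^ 2 + x.imJ ^ 2 + x.imK ^ 2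
  have hW : 0 < W := by
    have : normSq x.im = W := by simp [normSq_def', W]
    exact this ▸ normSq_nonneg.lt_of_ne' (normSq_ne_zero.2 hx)
  have hre : s' - x.re = k * (s - x.re) := by
    simpa [re_mul_mul_inv _ _ hb, p, q] using congrArg QuaternionAlgebra.re hconj
  have hnormSq : (s' - x.re) ^ 2 + W = k ^ 2 * ((s - x.re) ^ 2 + W) := by
    have := congrArg normSq hconj
    rw [normSq_mul_mul_inv _ _ hb, normSq_smul, normSq_star] at this
    simp only [normSq_def', p, q, re_sub, re_coe, imI_sub, imI_coe, imJ_sub, imJ_coe, imK_sub,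
      imK_coe, zero_sub, even_two, Even.neg_pow] at this
    linear_combination this
  have hk1 : k = 1 := by
    have : (k ^ 2 - 1) * W = 0 := by
      rw [hre] at hnormSq
      linear_combination -hnormSq
    have hk2 : k ^ 2 = 1 := sub_eq_zero.1 ((mul_eq_zero.1 this).resolve_right hW.ne')
    exact (pow_eq_one_iff_of_nonneg hk.le two_ne_zero).1 hk2
  have hs : s = s' := by
    rw [hk1, one_mul] at hre
    linarith
  subst hs
  refine ⟨re_eq_zero_of_mul_eq_star_mul (u := p) ?_ (by simpa [p] using hx), rfl⟩
  rw [hk1, one_smul] at hconj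
  exact (mul_inv_eq_iff_eq_mul₀ hb).1 hconj

end LinearOrderedField

theorem mul_self_eq_neg_one_iff {ω : ℍ[ℝ]} : ω * ω = -1 ↔ ω.re = 0 ∧ ‖ω‖ = 1 := by
  rw [← sq_eq_neg_normSq, normSq_eq_norm_mul_self]
  constructor
  · intro h
    have h1 : ‖ω‖ = 1 := by
      have := congrArg norm h
      rw [norm_mul, norm_neg, norm_one] at this
      nlinarith [norm_nonneg ω]
    simp [sq, h, h1]
  · rintro ⟨h, h1⟩
    simpa [sq, h1] using h

end Quaternion

theorem hermitian_2x2_nonreal_left_eigenvalues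
    (s s' : ℝ) (b : ℍ[ℝ]) (hb : b ≠ 0)
    (S : Matrix (Fin 2) (Fin 2) ℍ[ℝ])
    (hS : S = !![(s : ℍ[ℝ]), b; star b, (s' : ℍ[ℝ])]) :
    ((∃ lam : ℍ[ℝ], ¬ IsUnit (S - lam • (1 : Matrix (Fin 2) (Fin 2) ℍ[ℝ])) ∧
        lam ≠ (lam.re : ℍ[ℝ])) ↔ (b.re = 0 ∧ s = s')) ∧
    ((b.re = 0 ∧ s = s') →
      ∀ lam : ℍ[ℝ], ¬ IsUnit (S - lam • (1 : Matrix (Fin 2) (Fin 2) ℍ[ℝ])) ↔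
        ∃ ω : ℍ[ℝ], ω.re = 0 ∧ ‖ω‖ = 1 ∧ lam = (s : ℍ[ℝ]) + b * ω) := by
  have singular_iff : ∀ lam : ℍ[ℝ], ¬ IsUnit (S - lam • (1 : Matrix (Fin 2) (Fin 2) ℍ[ℝ])) ↔
      star b = (s' - lam) * b⁻¹ * (s - lam) := fun lam => by
    have : S - lam • 1 = !![s - lam, b; star b, s' - lam] := by simp [hS, one_fin_two]
    rw [this, isUnit_fin_two_iff_of_ne_zero hb, not_not]
  refine ⟨⟨fun ⟨lam, hlam, hnr⟩ => ?_, fun ⟨hre, hs⟩ => ?_⟩, fun ⟨hre, hs⟩ lam => ?_⟩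
  · exact re_eq_zero_and_eq_of_star_eq_mul_inv_mul hb (mt eq_re_iff_im_eq_zero.2 hnr)
      ((singular_iff lam).1 hlam)
  · subst hs
    obtain ⟨ω, hω, hbω⟩ := exists_mul_self_eq_neg_one_and_im_mul_ne_zero hb
    refine ⟨s + b * ω, (singular_iff _).2 ?_, ?_⟩
    · rw [star_eq_neg.2 hre, eq_comm, sub_mul_inv_mul_sub_eq_neg_iff hb]
      exact ⟨ω, hω, rfl⟩
    · rw [Ne, eq_re_iff_im_eq_zero, im_add, im_coe, zero_add]
      exact hbω
  · subst hs
    rw [singular_iff, star_eq_neg.2 hre, eq_comm, sub_mul_inv_mul_sub_eq_neg_iff hb]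
    simp_rw [mul_self_eq_neg_one_iff, and_assoc]
end

section
/- If λ is a left eigenvalue of a Hermitian quaternionic matrix S and v is a unit λ-eigenvector, then R(S,v) = v*λv = Re(λ); consequently t₁ ≤ Re(λ) ≤ t_n, where t₁ and t_n are the smallest and largest eigenvalues of S. -/
/-!
Write the orthonormal eigenvectors as the columns of `U`, so that `S = U D Uᴴ` with
`D = diag t` and `U` unitary. In the coordinates `c = Uᴴ v` the Rayleigh quotient becomes
`∑ |c_j|² t_j` with `∑ |c_j|² = 1`: a real convex combination of the `t_j`. Its real part is
also `∑ Re(v̄_i λ v_i) = Re λ · ∑ |v_i|² = Re λ`, because `Re(ā q a) = Re q · |a|²`.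
-/

open Quaternion Matrix

theorem Matrix.star_dotProduct_mul_mul_conjTranspose_mulVec {ι α : Type*} [Fintype ι]
    [Semiring α] [StarRing α] (U A : Matrix ι ι α) (v : ι → α) :
    star v ⬝ᵥ (U * A * Uᴴ) *ᵥ v = star (Uᴴ *ᵥ v) ⬝ᵥ A *ᵥ (Uᴴ *ᵥ v) := by
  rw [← mulVec_mulVec, ← mulVec_mulVec, dotProduct_mulVec, star_mulVec,
    conjTranspose_conjTranspose]

namespace Quaternion

section CommRing

variable {R ι : Type*} [CommRing R] [Fintype ι]

theorem coe_sum_s15 (f : ι → R) : ((∑ i, f i : R) : ℍ[R]) = ∑ i, (f i : ℍ[R]) := by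
  rw [← algebraMap_def, map_sum]

theorem re_sum (f : ι → ℍ[R]) : (∑ i, f i).re = ∑ i, (f i).re :=
  map_sum (QuaternionAlgebra.reₗ _ _ _) f Finset.univ

theorem re_star_mul_mul_self (q a : ℍ[R]) : (star a * (q * a)).re = q.re * normSq a := by
  simp only [re_mul, re_star, imI_star, imJ_star, imK_star, imI_mul, imJ_mul, imK_mul,
    normSq_def']
  ring

theorem star_dotProduct_self_s15 (v : ι → ℍ[R]) : star v ⬝ᵥ v = ↑(∑ i, normSq (v i)) := by
  simp only [dotProduct, Pi.star_apply, star_mul_self, coe_sum_s15]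

theorem star_dotProduct_diagonal_mulVec [DecidableEq ι] (t : ι → R) (c : ι → ℍ[R]) :
    star c ⬝ᵥ diagonal (fun j => (t j : ℍ[R])) *ᵥ c = ↑(∑ j, normSq (c j) * t j) := by
  simp only [dotProduct, mulVec_diagonal, Pi.star_apply, coe_sum_s15, coe_mul]
  refine Finset.sum_congr rfl fun j _ => ?_
  rw [coe_commutes, ← mul_assoc, star_mul_self]

theorem re_star_dotProduct_mul_left (q : ℍ[R]) (v : ι → ℍ[R]) :
    (star v ⬝ᵥ fun i => q * v i).re = q.re * ∑ i, normSq (v i) := by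
  simp only [dotProduct, Pi.star_apply, re_sum, re_star_mul_mul_self, Finset.mul_sum]

end CommRing

variable {ι : Type*} [Fintype ι] [DecidableEq ι] {U : Matrix ι ι ℍ[ℝ]}

theorem sum_normSq_conjTranspose_mulVec (hU : Uᴴ * U = 1) (v : ι → ℍ[ℝ]) :
    ∑ j, normSq ((Uᴴ *ᵥ v) j) = ∑ i, normSq (v i) := by
  have := star_dotProduct_mul_mul_conjTranspose_mulVec U 1 v
  rw [mul_one, mul_eq_one_comm.mp hU, one_mulVec, one_mulVec, star_dotProduct_self_s15,
    star_dotProduct_self_s15] at this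
  exact (coe_injective this).symm

theorem star_dotProduct_mulVec_of_mul_eq_mul_diagonal {S : Matrix ι ι ℍ[ℝ]} {t : ι → ℝ}
    (hU : Uᴴ * U = 1) (hSU : S * U = U * diagonal (fun j => (t j : ℍ[ℝ]))) (v : ι → ℍ[ℝ]) :
    star v ⬝ᵥ S *ᵥ v = ↑(∑ j, normSq ((Uᴴ *ᵥ v) j) * t j) := by
  have hS : S = U * diagonal (fun j => (t j : ℍ[ℝ])) * Uᴴ := by
    rw [← hSU, mul_assoc, mul_eq_one_comm.mp hU, mul_one]
  rw [hS, star_dotProduct_mul_mul_conjTranspose_mulVec, star_dotProduct_diagonal_mulVec]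

end Quaternion

theorem left_eigenvalue_rayleigh_real_part_general {n : ℕ} (hn : 0 < n)
    (S : Matrix (Fin n) (Fin n) ℍ[ℝ])
    (t : Fin n → ℝ) (ht : Monotone t) (u : Fin n → Fin n → ℍ[ℝ])
    (horth : ∀ i j, star (u i) ⬝ᵥ u j = if i = j then 1 else 0)
    (heig : ∀ j, S.mulVec (u j) = fun l => u j l * (t j : ℍ[ℝ]))
    (lam : ℍ[ℝ]) (v : Fin n → ℍ[ℝ]) (hv : ∑ i, ‖v i‖ ^ 2 = 1)
    (hveig : S.mulVec v = fun i => lam * v i) :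
    star v ⬝ᵥ S.mulVec v = star v ⬝ᵥ (fun i => lam * v i) ∧
    (star v ⬝ᵥ S.mulVec v) = (lam.re : ℍ[ℝ]) ∧
    t ⟨0, hn⟩ ≤ lam.re ∧ lam.re ≤ t ⟨n - 1, Nat.sub_lt hn one_pos⟩ := by
  set U : Matrix (Fin n) (Fin n) ℍ[ℝ] := of fun i j => u j i
  have hU : Uᴴ * U = 1 := ext fun i j => by
    simpa [mul_apply, conjTranspose_apply, dotProduct, one_apply, U] using horth i j
  have hSU : S * U = U * diagonal (fun j => (t j : ℍ[ℝ])) := ext fun i j => by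
    simpa [mul_apply, diagonal, mulVec, dotProduct, U] using congrFun (heig j) i
  have hquad := star_dotProduct_mulVec_of_mul_eq_mul_diagonal hU hSU v
  have hv' : ∑ i, normSq (v i) = 1 := by
    simpa only [normSq_eq_norm_mul_self, sq] using hv
  have hre : ∑ j, normSq ((Uᴴ *ᵥ v) j) * t j = lam.re := by
    have := congrArg QuaternionAlgebra.re hquad
    rwa [hveig, re_star_dotProduct_mul_left, hv', mul_one, re_coe, eq_comm] at this
  have hbounds := (convex_Icc (t ⟨0, hn⟩) (t ⟨n - 1, Nat.sub_lt hn one_pos⟩)).sum_mem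
    (t := Finset.univ) (z := t) (fun j _ => normSq_nonneg)
    (by rw [sum_normSq_conjTranspose_mulVec hU, hv'])
    (fun j _ => ⟨ht (Nat.zero_le _), ht (Nat.le_sub_one_of_lt j.isLt)⟩)
  simp only [smul_eq_mul, hre] at hbounds
  exact ⟨by rw [hveig], by rw [hquad, hre], hbounds⟩

theorem left_eigenvalue_rayleigh_real_part {n : ℕ} (hn : 0 < n)
    (S : Matrix (Fin n) (Fin n) ℍ[ℝ]) (hS : S.IsHermitian)
    (t : Fin n → ℝ) (ht : Monotone t) (u : Fin n → Fin n → ℍ[ℝ])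
    (horth : ∀ i j, star (u i) ⬝ᵥ u j = if i = j then 1 else 0)
    (heig : ∀ j, S.mulVec (u j) = fun l => u j l * (t j : ℍ[ℝ]))
    (lam : ℍ[ℝ]) (v : Fin n → ℍ[ℝ]) (hv : ∑ i, ‖v i‖ ^ 2 = 1)
    (hveig : S.mulVec v = fun i => lam * v i) :
    star v ⬝ᵥ S.mulVec v = star v ⬝ᵥ (fun i => lam * v i) ∧
    (star v ⬝ᵥ S.mulVec v) = (lam.re : ℍ[ℝ]) ∧
    t ⟨0, hn⟩ ≤ lam.re ∧ lam.re ≤ t ⟨n - 1, Nat.sub_lt hn one_pos⟩ :=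
  left_eigenvalue_rayleigh_real_part_general hn S t ht u horth heig lam v hv hveig
end

section
/- If an n×n Hermitian quaternionic matrix S has a left eigenvalue λ with k = dim V(λ) > ⌈n/2⌉, then t_{n−k+1} = … = t_k = Re(λ), so Re(λ) is a right eigenvalue of S of multiplicity at least 2k − n. -/
open Quaternion Matrix MulOpposite

private lemma quat_re_sum {ι : Type*} (s : Finset ι) (f : ι → ℍ[ℝ]) :
    (∑ j ∈ s, f j).re = ∑ j ∈ s, (f j).re :=
  map_sum (AddMonoidHom.mk' QuaternionAlgebra.re (fun a b => Quaternion.re_add a b)) f s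

private lemma quat_re_comm (a b : ℍ[ℝ]) : (a * b).re = (b * a).re := by
  simp only [Quaternion.re_mul]; ring

private lemma dot_expand {n : ℕ} {ι : Type*} [Fintype ι] (w : Fin n → ℍ[ℝ])
    (f : ι → Fin n → ℍ[ℝ]) (c : ι → ℍ[ℝ]) :
    w ⬝ᵥ (fun i => ∑ j, f j i * c j) = ∑ j, (w ⬝ᵥ f j) * c j := by
  simp only [dotProduct, Finset.mul_sum, Finset.sum_mul, mul_assoc]
  exact Finset.sum_comm

private noncomputable def quatPiEquiv (n : ℕ) :
    (Fin n → ℍ[ℝ]) ≃ₗ[ℍ[ℝ]ᵐᵒᵖ] (Fin n → ℍ[ℝ]ᵐᵒᵖ) where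
  toFun v i := op (v i)
  invFun w i := unop (w i)
  map_add' v w := by funext i; simp
  map_smul' a v := by
    funext i
    simp [MulOpposite.smul_eq_mul_unop, smul_eq_mul]
  left_inv v := by funext i; simp
  right_inv w := by funext i; simp

private lemma main_est {n : ℕ} (S : Matrix (Fin n) (Fin n) ℍ[ℝ])
    (t : Fin n → ℝ) (u : Fin n → Fin n → ℍ[ℝ])
    (horth : ∀ i j, star (u i) ⬝ᵥ u j = if i = j then 1 else 0)
    (heig : ∀ j, S.mulVec (u j) = fun l => u j l * (t j : ℍ[ℝ]))
    (lam : ℍ[ℝ]) (V : Submodule ℍ[ℝ]ᵐᵒᵖ (Fin n → ℍ[ℝ]))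
    (hV : (V : Set (Fin n → ℍ[ℝ])) = {v | S.mulVec v = fun i => lam * v i})
    (k : ℕ) (hk : k = Module.finrank ℍ[ℝ]ᵐᵒᵖ V)
    (A : Finset (Fin n)) (hA : n < k + A.card) :
    ∃ c : Fin n → ℍ[ℝ], (∀ j ∉ A, c j = 0) ∧ (0 < ∑ j, normSq (c j)) ∧
      (∑ j, t j * normSq (c j)) = lam.re * ∑ j, normSq (c j) := by
  haveI : FiniteDimensional ℍ[ℝ]ᵐᵒᵖ (Fin n → ℍ[ℝ]) :=
    Module.Finite.equiv (quatPiEquiv n).symm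
  have hM : Module.finrank ℍ[ℝ]ᵐᵒᵖ (Fin n → ℍ[ℝ]) = n := by
    rw [(quatPiEquiv n).finrank_eq]
    simp [Module.finrank_pi]
  -- the linear map from coefficients to vectors
  let Φ : (↥A → ℍ[ℝ]ᵐᵒᵖ) →ₗ[ℍ[ℝ]ᵐᵒᵖ] (Fin n → ℍ[ℝ]) :=
    { toFun := fun d => ∑ j : ↥A, d j • u ↑j
      map_add' := by intro d₁ d₂; simp [add_smul, Finset.sum_add_distrib]
      map_smul' := by intro a d; simp [mul_smul, Finset.smul_sum, smul_eq_mul] }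
  have hΦ : ∀ d : ↥A → ℍ[ℝ]ᵐᵒᵖ, Φ d = fun i => ∑ j : ↥A, u ↑j i * unop (d j) := by
    intro d
    funext i
    show (∑ j : ↥A, d j • u ↑j) i = _
    rw [Finset.sum_apply]
    simp [MulOpposite.smul_eq_mul_unop]
  have hΦcoef : ∀ (d : ↥A → ℍ[ℝ]ᵐᵒᵖ) (j0 : ↥A), star (u ↑j0) ⬝ᵥ Φ d = unop (d j0) := by
    intro d j0
    rw [hΦ d, dot_expand (star (u ↑j0)) (fun j : ↥A => u ↑j) (fun j => unop (d j))]
    simp only [horth, Subtype.coe_inj, ite_mul, one_mul, zero_mul]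
    simp [Finset.sum_ite_eq]
  have hΦinj : Function.Injective Φ := by
    rw [← LinearMap.ker_eq_bot]
    rw [Submodule.eq_bot_iff]
    intro d hd
    funext j0
    have := hΦcoef d j0
    rw [hd] at this
    simp only [dotProduct, Pi.zero_apply, mul_zero, Finset.sum_const_zero] at this
    simpa using this.symm
  have hrank : Module.finrank ℍ[ℝ]ᵐᵒᵖ (LinearMap.range Φ) = A.card := by
    rw [LinearMap.finrank_range_of_inj hΦinj]
    simp [Module.finrank_pi]
  -- intersection is nontrivial
  have hsum := Submodule.finrank_sup_add_finrank_inf_eq V (LinearMap.range Φ)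
  have hsup : Module.finrank ℍ[ℝ]ᵐᵒᵖ ↥(V ⊔ LinearMap.range Φ) ≤ n := by
    have h := Submodule.finrank_le (V ⊔ LinearMap.range Φ)
    rwa [hM] at h
  have hinf : 0 < Module.finrank ℍ[ℝ]ᵐᵒᵖ ↥(V ⊓ LinearMap.range Φ) := by omega
  obtain ⟨v, hvmem, hv0⟩ : ∃ v ∈ V ⊓ LinearMap.range Φ, v ≠ 0 := by
    by_contra h
    push_neg at h
    have hbot : V ⊓ LinearMap.range Φ = ⊥ := (Submodule.eq_bot_iff _).2 h
    rw [hbot] at hinf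
    simp at hinf
  obtain ⟨d, hd⟩ := hvmem.2
  have hvV : S.mulVec v = fun i => lam * v i := by
    have hm : v ∈ (V : Set (Fin n → ℍ[ℝ])) := hvmem.1
    rw [hV] at hm
    exact hm
  -- coefficients as functions on Fin n
  set c : Fin n → ℍ[ℝ] := fun j => if h : j ∈ A then unop (d ⟨j, h⟩) else 0 with hc
  have hsupp : ∀ j ∉ A, c j = 0 := by intro j hj; simp [hc, hj]
  have hvc : v = fun i => ∑ j, u j i * c j := by
    funext i
    rw [← hd, hΦ d]
    show (∑ j : ↥A, u ↑j i * unop (d j)) = _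
    have step1 : (∑ j : ↥A, u ↑j i * unop (d j)) = ∑ j : ↥A, u (↑j) i * c ↑j := by
      refine Finset.sum_congr rfl fun j _ => ?_
      simp [hc, j.2]
    rw [step1, Finset.sum_coe_sort A (fun j => u j i * c j)]
    exact Finset.sum_subset (Finset.subset_univ A)
      (fun j _ hj => by rw [hsupp j hj, mul_zero])
  have hcoef : ∀ j0, star (u j0) ⬝ᵥ v = c j0 := by
    intro j0
    rw [hvc, dot_expand (star (u j0)) u c]
    simp only [horth, ite_mul, one_mul, zero_mul]
    simp [Finset.sum_ite_eq]
  have hSv : S.mulVec v = fun i => ∑ j, u j i * ((t j : ℍ[ℝ]) * c j) := by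
    funext i
    show S i ⬝ᵥ v = _
    rw [hvc, dot_expand (S i) u c]
    refine Finset.sum_congr rfl fun j _ => ?_
    have : S i ⬝ᵥ u j = u j i * (t j : ℍ[ℝ]) := congrFun (heig j) i
    rw [this, mul_assoc]
  have h1 : (star v ⬝ᵥ S.mulVec v).re = ∑ j, t j * normSq (c j) := by
    rw [hSv, dot_expand (star v) u (fun j => (t j : ℍ[ℝ]) * c j)]
    rw [quat_re_sum]
    refine Finset.sum_congr rfl fun j _ => ?_
    rw [star_dotProduct, hcoef j]
    rw [show star (c j) * ((t j : ℍ[ℝ]) * c j) = (t j : ℍ[ℝ]) * (star (c j) * c j) by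
      rw [← mul_assoc, ← Quaternion.coe_commutes, mul_assoc]]
    rw [Quaternion.star_mul_self]
    simp
  have hnormv : ∑ i, normSq (v i) = ∑ j, normSq (c j) := by
    have e1 : (star v ⬝ᵥ v).re = ∑ i, normSq (v i) := by
      simp only [dotProduct, Pi.star_apply]
      rw [quat_re_sum]
      refine Finset.sum_congr rfl fun i _ => ?_
      rw [Quaternion.star_mul_self]
      simp
    have e2 : (star v ⬝ᵥ v).re = ∑ j, normSq (c j) := by
      have hdd := dot_expand (star v) u c
      rw [← hvc] at hdd
      rw [hdd, quat_re_sum]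
      refine Finset.sum_congr rfl fun j _ => ?_
      rw [star_dotProduct, hcoef j, Quaternion.star_mul_self]
      simp
    rw [← e1, e2]
  have h3 : (star v ⬝ᵥ S.mulVec v).re = lam.re * ∑ j, normSq (c j) := by
    rw [hvV]
    have key : ∀ x : ℍ[ℝ], (star x * (lam * x)).re = lam.re * normSq x := by
      intro x
      rw [quat_re_comm, mul_assoc, Quaternion.self_mul_star]
      simp
    simp only [dotProduct, Pi.star_apply]
    rw [quat_re_sum]
    rw [Finset.sum_congr rfl (fun i _ => key (v i))]
    rw [← Finset.mul_sum, hnormv]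
  have heq : (∑ j, t j * normSq (c j)) = lam.re * ∑ j, normSq (c j) := by
    rw [← h1, h3]
  have hex : ∃ j, c j ≠ 0 := by
    by_contra h
    push_neg at h
    apply hv0
    rw [hvc]
    funext i
    simp [h]
  obtain ⟨j0, hj0⟩ := hex
  have hpos : 0 < ∑ j, normSq (c j) :=
    Finset.sum_pos' (fun j _ => Quaternion.normSq_nonneg)
      ⟨j0, Finset.mem_univ _,
        lt_of_le_of_ne Quaternion.normSq_nonneg (Ne.symm (Quaternion.normSq_ne_zero.2 hj0))⟩
  exact ⟨c, hsupp, hpos, heq⟩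

theorem left_eigenvalue_high_dim_eigenspace {n : ℕ}
    (S : Matrix (Fin n) (Fin n) ℍ[ℝ]) (hS : S.IsHermitian)
    (t : Fin n → ℝ) (ht : Monotone t) (u : Fin n → Fin n → ℍ[ℝ])
    (horth : ∀ i j, star (u i) ⬝ᵥ u j = if i = j then 1 else 0)
    (heig : ∀ j, S.mulVec (u j) = fun l => u j l * (t j : ℍ[ℝ]))
    (lam : ℍ[ℝ]) (hlam : ¬ IsUnit (S - lam • (1 : Matrix (Fin n) (Fin n) ℍ[ℝ])))
    (V : Submodule ℍ[ℝ]ᵐᵒᵖ (Fin n → ℍ[ℝ]))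
    (hV : (V : Set (Fin n → ℍ[ℝ])) = {v | S.mulVec v = fun i => lam * v i})
    (k : ℕ) (hk : k = Module.finrank ℍ[ℝ]ᵐᵒᵖ V) (hkn : k ≤ n)
    (hbig : (n + 1) / 2 < k) :
    (∀ j : Fin n, n - k ≤ (j : ℕ) → (j : ℕ) ≤ k - 1 → t j = lam.re) ∧
    2 * k - n ≤ (Finset.univ.filter fun j : Fin n => t j = lam.re).card := by
  have hk1 : 1 ≤ k := by omega
  have hn2 : n + 1 ≤ 2 * k := by omega
  have hn1 : 1 ≤ n := le_trans hk1 hkn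
  have bound_le : ∀ (A : Finset (Fin n)) (T : ℝ), n < k + A.card →
      (∀ j ∈ A, t j ≤ T) → lam.re ≤ T := by
    intro A T hA hT
    obtain ⟨c, hsupp, hpos, heq⟩ := main_est S t u horth heig lam V hV k hk A hA
    have hle : (∑ j, t j * normSq (c j)) ≤ ∑ j, T * normSq (c j) := by
      refine Finset.sum_le_sum fun j _ => ?_
      by_cases hj : j ∈ A
      · exact mul_le_mul_of_nonneg_right (hT j hj) Quaternion.normSq_nonneg
      · rw [hsupp j hj]; simp
    rw [heq, ← Finset.mul_sum] at hle
    exact le_of_mul_le_mul_right hle hpos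
  have bound_ge : ∀ (A : Finset (Fin n)) (T : ℝ), n < k + A.card →
      (∀ j ∈ A, T ≤ t j) → T ≤ lam.re := by
    intro A T hA hT
    obtain ⟨c, hsupp, hpos, heq⟩ := main_est S t u horth heig lam V hV k hk A hA
    have hle : (∑ j, T * normSq (c j)) ≤ ∑ j, t j * normSq (c j) := by
      refine Finset.sum_le_sum fun j _ => ?_
      by_cases hj : j ∈ A
      · exact mul_le_mul_of_nonneg_right (hT j hj) Quaternion.normSq_nonneg
      · rw [hsupp j hj]; simp
    rw [heq, ← Finset.mul_sum] at hle
    exact le_of_mul_le_mul_right hle hpos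
  let j1 : Fin n := ⟨k - 1, by omega⟩
  let j0 : Fin n := ⟨n - k, by omega⟩
  have c1 : (Finset.Iic j1).card = k := by
    rw [Fin.card_Iic]; show k - 1 + 1 = k; omega
  have c2 : (Finset.Ici j1).card = n - (k - 1) := by
    rw [Fin.card_Ici]
  have c3 : (Finset.Iic j0).card = n - k + 1 := by
    rw [Fin.card_Iic]
  have c4 : (Finset.Ici j0).card = n - (n - k) := by
    rw [Fin.card_Ici]
  have b1 : lam.re ≤ t j1 :=
    bound_le (Finset.Iic j1) (t j1) (by omega) (fun j hj => ht (Finset.mem_Iic.mp hj))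
  have b2 : t j1 ≤ lam.re :=
    bound_ge (Finset.Ici j1) (t j1) (by omega) (fun j hj => ht (Finset.mem_Ici.mp hj))
  have b3 : lam.re ≤ t j0 :=
    bound_le (Finset.Iic j0) (t j0) (by omega) (fun j hj => ht (Finset.mem_Iic.mp hj))
  have b4 : t j0 ≤ lam.re :=
    bound_ge (Finset.Ici j0) (t j0) (by omega) (fun j hj => ht (Finset.mem_Ici.mp hj))
  have ht1 : t j1 = lam.re := le_antisymm b2 b1
  have ht0 : t j0 = lam.re := le_antisymm b4 b3
  have part1 : ∀ j : Fin n, n - k ≤ (j : ℕ) → (j : ℕ) ≤ k - 1 → t j = lam.re := by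
    intro j ha hb
    have l1 : t j0 ≤ t j := ht (by exact ha)
    have l2 : t j ≤ t j1 := ht (by exact hb)
    linarith [ht0, ht1, l1, l2]
  refine ⟨part1, ?_⟩
  have hsub : Finset.Icc j0 j1 ⊆ Finset.univ.filter (fun j : Fin n => t j = lam.re) := by
    intro j hj
    rw [Finset.mem_Icc] at hj
    exact Finset.mem_filter.mpr ⟨Finset.mem_univ _, part1 j hj.1 hj.2⟩
  have hcard : (Finset.Icc j0 j1).card = 2 * k - n := by
    rw [Fin.card_Icc]; show k - 1 + 1 - (n - k) = 2 * k - n; omega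
  calc 2 * k - n = (Finset.Icc j0 j1).card := hcard.symm
    _ ≤ _ := Finset.card_le_card hsub
end

section
/- Every right eigenvalue and every left eigenvalue of a symplectic quaternionic matrix A (A*A = I) has norm 1. -/
open Quaternion Matrix

private lemma key_dot {n : ℕ} (A : Matrix (Fin n) (Fin n) ℍ[ℝ]) (hA : Aᴴ * A = 1)
    (w : Fin n → ℍ[ℝ]) :
    star (A.mulVec w) ⬝ᵥ (A.mulVec w) = star w ⬝ᵥ w := by
  rw [star_mulVec, dotProduct_mulVec, vecMul_vecMul, hA, vecMul_one]

private lemma star_dot_self {n : ℕ} (w : Fin n → ℍ[ℝ]) :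
    star w ⬝ᵥ w = ((∑ i, normSq (w i) : ℝ) : ℍ[ℝ]) := by
  simp only [dotProduct, Pi.star_apply, Quaternion.star_mul_self]
  exact (map_sum (algebraMap ℝ ℍ[ℝ]) _ _).symm

private lemma sum_normSq_pos {n : ℕ} {w : Fin n → ℍ[ℝ]} (hw : w ≠ 0) :
    0 < ∑ i, normSq (w i) := by
  obtain ⟨i, hi⟩ := Function.ne_iff.mp hw
  refine Finset.sum_pos' (fun j _ => normSq_nonneg) ⟨i, Finset.mem_univ i, ?_⟩
  have : normSq (w i) ≠ 0 := by simpa [normSq_eq_zero] using hi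
  exact lt_of_le_of_ne normSq_nonneg (Ne.symm this)

private lemma norm_one_of_normSq_one {q : ℍ[ℝ]} (h : normSq q = 1) : ‖q‖ = 1 := by
  have h2 : ‖q‖ * ‖q‖ = 1 := by rw [← normSq_eq_norm_mul_self, h]
  nlinarith [norm_nonneg q]

theorem symplectic_eigenvalues_norm_one {n : ℕ}
    (A : Matrix (Fin n) (Fin n) ℍ[ℝ]) (hA : Aᴴ * A = 1) :
    (∀ (q : ℍ[ℝ]) (u : Fin n → ℍ[ℝ]), u ≠ 0 →
        A.mulVec u = (fun i => u i * q) → ‖q‖ = 1) ∧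
    (∀ (lam : ℍ[ℝ]) (v : Fin n → ℍ[ℝ]), v ≠ 0 →
        A.mulVec v = (fun i => lam * v i) → ‖lam‖ = 1) := by
  constructor
  · intro q u hu heig
    have key := key_dot A hA u
    rw [heig, star_dot_self, star_dot_self] at key
    have key' : ∑ i, normSq (u i * q) = ∑ i, normSq (u i) :=
      Quaternion.coe_injective key
    simp only [normSq.map_mul, ← Finset.sum_mul] at key'
    have hS := sum_normSq_pos hu
    exact norm_one_of_normSq_one (by nlinarith)
  · intro lam v hv heig
    have key := key_dot A hA v
    rw [heig, star_dot_self, star_dot_self] at key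
    have key' : ∑ i, normSq (lam * v i) = ∑ i, normSq (v i) :=
      Quaternion.coe_injective key
    simp only [normSq.map_mul, ← Finset.mul_sum] at key'
    have hS := sum_normSq_pos hv
    exact norm_one_of_normSq_one (by nlinarith)
end
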